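/- arXiv:2202.03709 — 6 statements merged into one kernel-verified Lean document; each statement's English description precedes it below -/
import Mathlib

section
/- Let A and B be unital ℂ-algebras with ℤ₂-gradings 𝒜 and ℬ, and let u ∈ A be homogeneous of degree 0 with u² = 1 which implements the grading of A (u·a = (−1)^i·a·u for every i : ZMod 2 and every a ∈ 𝒜 i). Then there is a ℂ-algebra isomorphism κ from the graded tensor product A ⊗' B onto the ordinary tensor product A ⊗[ℂ] B satisfying κ(a ⊗' b) = a ⊗ b₀ + (a·u) ⊗ b₁ for all a ∈ A and b ∈ B, whose inverse satisfies κ⁻¹(a ⊗ b) = a ⊗' b₀ + (a·u) ⊗' b₁. (Algebraic core of the Klein transformation, Proposition 3.1 / Theorem 3.2(a).) -/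
open scoped TensorProduct
open DirectSum

/-!
Write `b = b₀ + b₁`. For an algebra map `ι` and an involution `v` commuting with its image,
`b ↦ ι b₀ + v ι b₁` is again an algebra map. With `ι = 1 ⊗ -` and `v = u ⊗ 1` it supercommutes
with `a ↦ a ⊗ 1`, because conjugation by `u` is the grading automorphism of `A`, so the universal
property of the graded tensor product gives `κ`. With `ι = 1 ⊗' -` and `v = u ⊗' 1`, the Koszul
sign in `(u ⊗' b₁)(a ⊗' 1)` cancels against the one in `u a = ± a u`, so it commutes with
`a ↦ a ⊗' 1` and the universal property of the ordinary tensor product gives the inverse. Both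
composites fix pure tensors since `u² = 1`.
-/

namespace GradedTensorProduct

variable {R ι A B : Type*} [CommSemiring ι] [DecidableEq ι] [Module ι (Additive ℤˣ)]
  [CommRing R] [Ring A] [Ring B] [Algebra R A] [Algebra R B]
  (𝒜 : ι → Submodule R A) (ℬ : ι → Submodule R B) [GradedAlgebra 𝒜] [GradedAlgebra ℬ]

theorem add_tmul (a₁ a₂ : A) (b : B) :
    ((a₁ + a₂) ᵍ⊗ₜ[R] b : 𝒜 ᵍ⊗[R] ℬ) = a₁ ᵍ⊗ₜ b + a₂ ᵍ⊗ₜ b := by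
  rw [tmul, TensorProduct.add_tmul, map_add]

theorem tmul_add (a : A) (b₁ b₂ : B) :
    (a ᵍ⊗ₜ[R] (b₁ + b₂) : 𝒜 ᵍ⊗[R] ℬ) = a ᵍ⊗ₜ b₁ + a ᵍ⊗ₜ b₂ := by
  rw [tmul, TensorProduct.tmul_add, map_add]

theorem tmul_mul_tmul_of_mem_zero_left (a₁ : A) {b₁ : B} (hb₁ : b₁ ∈ ℬ 0) (a₂ : A) (b₂ : B) :
    (a₁ ᵍ⊗ₜ[R] b₁ * a₂ ᵍ⊗ₜ[R] b₂ : 𝒜 ᵍ⊗[R] ℬ) = (a₁ * a₂) ᵍ⊗ₜ (b₁ * b₂) := by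
  induction a₂ using DirectSum.Decomposition.inductionOn 𝒜 with
  | zero => simp [tmul]
  | homogeneous a₂ => exact tmul_zero_coe_mul_coe_tmul 𝒜 ℬ a₁ ⟨b₁, hb₁⟩ a₂ b₂
  | add x y hx hy => rw [add_tmul, mul_add, hx, hy, mul_add, add_tmul]

theorem tmul_mul_tmul_of_mem_zero_right (a₁ : A) (b₁ : B) {a₂ : A} (ha₂ : a₂ ∈ 𝒜 0) (b₂ : B) :
    (a₁ ᵍ⊗ₜ[R] b₁ * a₂ ᵍ⊗ₜ[R] b₂ : 𝒜 ᵍ⊗[R] ℬ) = (a₁ * a₂) ᵍ⊗ₜ (b₁ * b₂) := by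
  induction b₁ using DirectSum.Decomposition.inductionOn ℬ with
  | zero => simp [tmul]
  | homogeneous b₁ => exact tmul_coe_mul_zero_coe_tmul 𝒜 ℬ a₁ b₁ ⟨a₂, ha₂⟩ b₂
  | add x y hx hy => rw [tmul_add, add_mul, hx, hy, add_mul, tmul_add]

end GradedTensorProduct

theorem ZMod.eq_zero_or_eq_one (i : ZMod 2) : i = 0 ∨ i = 1 := by
  revert i; decide

section ZModTwo

variable {R A B C : Type*} [CommRing R] [Ring A] [Ring B] [Ring C]
  [Algebra R A] [Algebra R B] [Algebra R C]
  (𝒜 : ZMod 2 → Submodule R A) (ℬ : ZMod 2 → Submodule R B) [GradedAlgebra ℬ]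

theorem decompose_zero_add_decompose_one (b : B) :
    (decompose ℬ b 0 : B) + decompose ℬ b 1 = b := by
  classical
  conv_rhs => rw [← sum_support_decompose ℬ b]
  rw [Finset.sum_subset (Finset.subset_univ _) fun i _ hi => by
    rw [DFinsupp.notMem_support_iff.mp hi, ZeroMemClass.coe_zero]]
  exact (Fin.sum_univ_two (fun i : Fin 2 => (decompose ℬ b i : B))).symm

noncomputable def twistLinearMap (ι : B →ₗ[R] C) (v : C) : B →ₗ[R] C :=
  ι ∘ₗ GradedAlgebra.proj ℬ 0 + LinearMap.mulLeft R v ∘ₗ ι ∘ₗ GradedAlgebra.proj ℬ 1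

theorem twistLinearMap_apply (ι : B →ₗ[R] C) (v : C) (b : B) :
    twistLinearMap ℬ ι v b = ι (decompose ℬ b 0) + v * ι (decompose ℬ b 1) := rfl

variable {ℬ} in
theorem twistLinearMap_of_mem_zero (ι : B →ₗ[R] C) (v : C) {b : B} (hb : b ∈ ℬ 0) :
    twistLinearMap ℬ ι v b = ι b := by
  rw [twistLinearMap_apply, decompose_of_mem_same ℬ hb, decompose_of_mem_ne ℬ hb zero_ne_one,
    map_zero, mul_zero, add_zero]

variable {ℬ} in
theorem twistLinearMap_of_mem_one (ι : B →ₗ[R] C) (v : C) {b : B} (hb : b ∈ ℬ 1) :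
    twistLinearMap ℬ ι v b = v * ι b := by
  rw [twistLinearMap_apply, decompose_of_mem_same ℬ hb, decompose_of_mem_ne ℬ hb one_ne_zero,
    map_zero, zero_add]

noncomputable def twistHom (ι : B →ₐ[R] C) (v : C) (hv : v * v = 1)
    (hvι : ∀ b, Commute v (ι b)) : B →ₐ[R] C :=
  AlgHom.ofLinearMap (twistLinearMap ℬ ι.toLinearMap v)
    (by
      rw [twistLinearMap_of_mem_zero _ _ (SetLike.one_mem_graded ℬ), AlgHom.toLinearMap_apply,
        map_one])
    (by
      rw [LinearMap.map_mul_iff]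
      refine decompose_lhom_ext ℬ fun j => LinearMap.ext fun x => ?_
      refine decompose_lhom_ext ℬ fun k => LinearMap.ext fun y => ?_
      have hxy : (x * y : B) ∈ ℬ (j + k) := SetLike.mul_mem_graded x.2 y.2
      simp only [LinearMap.coe_comp, Function.comp_apply, Submodule.coe_subtype,
        LinearMap.compl₂_apply, LinearMap.compr₂_apply, LinearMap.mul_apply']
      fin_cases j <;> fin_cases k
      · simp only [twistLinearMap_of_mem_zero _ _ x.2, twistLinearMap_of_mem_zero _ _ y.2,
          twistLinearMap_of_mem_zero _ _ hxy, AlgHom.toLinearMap_apply, map_mul]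
      · simp only [twistLinearMap_of_mem_zero _ _ x.2, twistLinearMap_of_mem_one _ _ y.2,
          twistLinearMap_of_mem_one _ _ hxy, AlgHom.toLinearMap_apply, map_mul]
        rw [← mul_assoc, ← mul_assoc, (hvι x).eq]
      · simp only [twistLinearMap_of_mem_one _ _ x.2, twistLinearMap_of_mem_zero _ _ y.2,
          twistLinearMap_of_mem_one _ _ hxy, AlgHom.toLinearMap_apply, map_mul, mul_assoc]
      · simp only [twistLinearMap_of_mem_one _ _ x.2, twistLinearMap_of_mem_one _ _ y.2,
          twistLinearMap_of_mem_zero _ _ hxy, AlgHom.toLinearMap_apply, map_mul]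
        rw [(hvι x).eq, mul_assoc, ← mul_assoc v, hv, one_mul])

variable {ℬ} in
theorem twistHom_of_mem_zero (ι : B →ₐ[R] C) (v : C) (hv : v * v = 1)
    (hvι : ∀ b, Commute v (ι b)) {b : B} (hb : b ∈ ℬ 0) : twistHom ℬ ι v hv hvι b = ι b :=
  twistLinearMap_of_mem_zero _ v hb

variable {ℬ} in
theorem twistHom_of_mem_one (ι : B →ₐ[R] C) (v : C) (hv : v * v = 1)
    (hvι : ∀ b, Commute v (ι b)) {b : B} (hb : b ∈ ℬ 1) : twistHom ℬ ι v hv hvι b = v * ι b :=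
  twistLinearMap_of_mem_one _ v hb

/-- `u` is an even involution whose conjugation action is the grading automorphism of `A`. -/
structure ImplementsGrading (u : A) : Prop where
  mem_zero : u ∈ 𝒜 0
  mul_self : u * u = 1
  mul_comm_of_mem_zero : ∀ a ∈ 𝒜 0, u * a = a * u
  mul_anticomm_of_mem_one : ∀ a ∈ 𝒜 1, u * a = -(a * u)

namespace ImplementsGrading

variable {𝒜} {u : A}

open Algebra.TensorProduct in
noncomputable def kleinRight (hu : ImplementsGrading 𝒜 u) : B →ₐ[R] A ⊗[R] B :=
  twistHom ℬ includeRight (u ⊗ₜ 1)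
    (by rw [tmul_mul_tmul, hu.mul_self, one_mul, Algebra.TensorProduct.one_def])
    fun b => (Commute.one_right u).tmul (Commute.one_left b)

theorem kleinRight_of_mem_zero (hu : ImplementsGrading 𝒜 u) {b : B} (hb : b ∈ ℬ 0) :
    hu.kleinRight ℬ b = 1 ⊗ₜ b :=
  twistHom_of_mem_zero _ _ _ _ hb

theorem kleinRight_of_mem_one (hu : ImplementsGrading 𝒜 u) {b : B} (hb : b ∈ ℬ 1) :
    hu.kleinRight ℬ b = u ⊗ₜ b :=
  (twistHom_of_mem_one _ _ _ _ hb).trans <| by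
    rw [Algebra.TensorProduct.includeRight_apply, Algebra.TensorProduct.tmul_mul_tmul, mul_one,
      one_mul]

open Algebra.TensorProduct in
theorem includeLeft_mul_kleinRight (hu : ImplementsGrading 𝒜 u) ⦃i j : ZMod 2⦄ (a : 𝒜 i)
    (b : ℬ j) : (includeLeft : A →ₐ[R] A ⊗[R] B) a * hu.kleinRight ℬ b =
      (-1 : ℤˣ) ^ (j * i) • (hu.kleinRight ℬ b * (includeLeft : A →ₐ[R] A ⊗[R] B) a) := by
  obtain ⟨a, ha⟩ := a
  obtain ⟨b, hb⟩ := b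
  obtain rfl | rfl := ZMod.eq_zero_or_eq_one i <;> obtain rfl | rfl := ZMod.eq_zero_or_eq_one j
  · simp [includeLeft_apply, kleinRight_of_mem_zero ℬ hu hb, tmul_mul_tmul]
  · simp [includeLeft_apply, kleinRight_of_mem_one ℬ hu hb, tmul_mul_tmul,
      hu.mul_comm_of_mem_zero a ha]
  · simp [includeLeft_apply, kleinRight_of_mem_zero ℬ hu hb, tmul_mul_tmul]
  · simp [includeLeft_apply, kleinRight_of_mem_one ℬ hu hb, tmul_mul_tmul,
      hu.mul_anticomm_of_mem_one a ha, TensorProduct.neg_tmul]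

variable [GradedAlgebra 𝒜]

noncomputable def kleinHom (hu : ImplementsGrading 𝒜 u) : 𝒜 ᵍ⊗[R] ℬ →ₐ[R] A ⊗[R] B :=
  GradedTensorProduct.lift 𝒜 ℬ Algebra.TensorProduct.includeLeft (hu.kleinRight ℬ)
    (hu.includeLeft_mul_kleinRight ℬ)

theorem kleinHom_tmul_of_mem_zero (hu : ImplementsGrading 𝒜 u) (a : A) {b : B} (hb : b ∈ ℬ 0) :
    hu.kleinHom ℬ (a ᵍ⊗ₜ b) = a ⊗ₜ b := by
  rw [kleinHom, GradedTensorProduct.lift_tmul, kleinRight_of_mem_zero ℬ hu hb,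
    Algebra.TensorProduct.includeLeft_apply, Algebra.TensorProduct.tmul_mul_tmul, mul_one,
    one_mul]

theorem kleinHom_tmul_of_mem_one (hu : ImplementsGrading 𝒜 u) (a : A) {b : B} (hb : b ∈ ℬ 1) :
    hu.kleinHom ℬ (a ᵍ⊗ₜ b) = (a * u) ⊗ₜ b := by
  rw [kleinHom, GradedTensorProduct.lift_tmul, kleinRight_of_mem_one ℬ hu hb,
    Algebra.TensorProduct.includeLeft_apply, Algebra.TensorProduct.tmul_mul_tmul, one_mul]

theorem kleinHom_tmul (hu : ImplementsGrading 𝒜 u) (a : A) (b : B) :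
    hu.kleinHom ℬ (a ᵍ⊗ₜ b) =
      a ⊗ₜ (decompose ℬ b 0 : B) + (a * u) ⊗ₜ (decompose ℬ b 1 : B) := by
  conv_lhs => rw [← decompose_zero_add_decompose_one ℬ b]
  rw [GradedTensorProduct.tmul_add, map_add,
    kleinHom_tmul_of_mem_zero ℬ hu a (SetLike.coe_mem _),
    kleinHom_tmul_of_mem_one ℬ hu a (SetLike.coe_mem _)]

noncomputable def kleinInvRight (hu : ImplementsGrading 𝒜 u) : B →ₐ[R] 𝒜 ᵍ⊗[R] ℬ :=
  twistHom ℬ (GradedTensorProduct.includeRight 𝒜 ℬ) (u ᵍ⊗ₜ 1)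
    (by
      rw [GradedTensorProduct.tmul_mul_tmul_of_mem_zero_right 𝒜 ℬ _ _ hu.mem_zero, hu.mul_self,
        one_mul]
      rfl)
    (fun b => by
      rw [Commute, SemiconjBy, GradedTensorProduct.includeRight_apply,
        GradedTensorProduct.tmul_mul_tmul_of_mem_zero_left 𝒜 ℬ _ (SetLike.one_mem_graded ℬ),
        GradedTensorProduct.tmul_mul_tmul_of_mem_zero_right 𝒜 ℬ _ _ hu.mem_zero,
        one_mul, mul_one, one_mul, mul_one])

theorem kleinInvRight_of_mem_zero (hu : ImplementsGrading 𝒜 u) {b : B} (hb : b ∈ ℬ 0) :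
    hu.kleinInvRight ℬ b = 1 ᵍ⊗ₜ b :=
  twistHom_of_mem_zero _ _ _ _ hb

theorem kleinInvRight_of_mem_one (hu : ImplementsGrading 𝒜 u) {b : B} (hb : b ∈ ℬ 1) :
    hu.kleinInvRight ℬ b = u ᵍ⊗ₜ b :=
  (twistHom_of_mem_one _ _ _ _ hb).trans <| by
    rw [GradedTensorProduct.includeRight_apply,
      GradedTensorProduct.tmul_mul_tmul_of_mem_zero_left 𝒜 ℬ _ (SetLike.one_mem_graded ℬ),
      mul_one, one_mul]

theorem tmul_mul_tmul_one_of_mem_one (hu : ImplementsGrading 𝒜 u) {c : B} (hc : c ∈ ℬ 1)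
    (a : A) : (u ᵍ⊗ₜ[R] c * a ᵍ⊗ₜ[R] (1 : B) : 𝒜 ᵍ⊗[R] ℬ) = (a * u) ᵍ⊗ₜ c := by
  induction a using DirectSum.Decomposition.inductionOn 𝒜 with
  | zero => simp [GradedTensorProduct.tmul]
  | @homogeneous i a =>
    rw [GradedTensorProduct.tmul_coe_mul_coe_tmul 𝒜 ℬ u ⟨c, hc⟩ a, mul_one]
    obtain rfl | rfl := ZMod.eq_zero_or_eq_one i
    · simp [hu.mul_comm_of_mem_zero a a.2]
    · simp [hu.mul_anticomm_of_mem_one a a.2, GradedTensorProduct.tmul, TensorProduct.neg_tmul]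
  | add x y hx hy =>
    rw [GradedTensorProduct.add_tmul, mul_add, hx, hy, add_mul, GradedTensorProduct.add_tmul]

theorem commute_includeLeft_kleinInvRight (hu : ImplementsGrading 𝒜 u) (a : A) (b : B) :
    Commute (GradedTensorProduct.includeLeft 𝒜 ℬ a) (hu.kleinInvRight ℬ b) := by
  have h1 := SetLike.one_mem_graded ℬ
  induction b using DirectSum.Decomposition.inductionOn ℬ with
  | zero => simp
  | @homogeneous j b =>
    obtain ⟨b, hb⟩ := b
    rw [Commute, SemiconjBy, GradedTensorProduct.includeLeft_apply]
    obtain rfl | rfl := ZMod.eq_zero_or_eq_one j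
    · rw [kleinInvRight_of_mem_zero ℬ hu hb,
        GradedTensorProduct.tmul_mul_tmul_of_mem_zero_left 𝒜 ℬ _ h1,
        GradedTensorProduct.tmul_mul_tmul_of_mem_zero_left 𝒜 ℬ _ hb, mul_one, one_mul, one_mul,
        mul_one]
    · rw [kleinInvRight_of_mem_one ℬ hu hb,
        GradedTensorProduct.tmul_mul_tmul_of_mem_zero_left 𝒜 ℬ _ h1, one_mul,
        hu.tmul_mul_tmul_one_of_mem_one ℬ hb]
  | add x y hx hy => rw [map_add]; exact hx.add_right hy

noncomputable def kleinInvHom (hu : ImplementsGrading 𝒜 u) : A ⊗[R] B →ₐ[R] 𝒜 ᵍ⊗[R] ℬ :=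
  Algebra.TensorProduct.lift (GradedTensorProduct.includeLeft 𝒜 ℬ) (hu.kleinInvRight ℬ)
    (hu.commute_includeLeft_kleinInvRight ℬ)

theorem kleinInvHom_tmul_of_mem_zero (hu : ImplementsGrading 𝒜 u) (a : A) {b : B}
    (hb : b ∈ ℬ 0) : hu.kleinInvHom ℬ (a ⊗ₜ b) = a ᵍ⊗ₜ b := by
  rw [kleinInvHom, Algebra.TensorProduct.lift_tmul, kleinInvRight_of_mem_zero ℬ hu hb,
    GradedTensorProduct.includeLeft_apply,
    GradedTensorProduct.tmul_mul_tmul_of_mem_zero_left 𝒜 ℬ _ (SetLike.one_mem_graded ℬ),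
    mul_one, one_mul]

theorem kleinInvHom_tmul_of_mem_one (hu : ImplementsGrading 𝒜 u) (a : A) {b : B}
    (hb : b ∈ ℬ 1) : hu.kleinInvHom ℬ (a ⊗ₜ b) = (a * u) ᵍ⊗ₜ b := by
  rw [kleinInvHom, Algebra.TensorProduct.lift_tmul, kleinInvRight_of_mem_one ℬ hu hb,
    GradedTensorProduct.includeLeft_apply,
    GradedTensorProduct.tmul_mul_tmul_of_mem_zero_left 𝒜 ℬ _ (SetLike.one_mem_graded ℬ),
    one_mul]

theorem kleinInvHom_tmul (hu : ImplementsGrading 𝒜 u) (a : A) (b : B) :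
    hu.kleinInvHom ℬ (a ⊗ₜ b) =
      a ᵍ⊗ₜ (decompose ℬ b 0 : B) + (a * u) ᵍ⊗ₜ (decompose ℬ b 1 : B) := by
  conv_lhs => rw [← decompose_zero_add_decompose_one ℬ b]
  rw [TensorProduct.tmul_add, map_add,
    kleinInvHom_tmul_of_mem_zero ℬ hu a (SetLike.coe_mem _),
    kleinInvHom_tmul_of_mem_one ℬ hu a (SetLike.coe_mem _)]

theorem kleinHom_comp_kleinInvHom (hu : ImplementsGrading 𝒜 u) :
    (hu.kleinHom ℬ).comp (hu.kleinInvHom ℬ) = AlgHom.id R (A ⊗[R] B) := by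
  refine Algebra.TensorProduct.ext' fun a b => ?_
  conv_rhs => rw [← decompose_zero_add_decompose_one ℬ b]
  rw [AlgHom.comp_apply, kleinInvHom_tmul, map_add,
    kleinHom_tmul_of_mem_zero ℬ hu a (SetLike.coe_mem _),
    kleinHom_tmul_of_mem_one ℬ hu _ (SetLike.coe_mem _), mul_assoc, hu.mul_self, mul_one,
    AlgHom.id_apply, TensorProduct.tmul_add]

theorem kleinInvHom_comp_kleinHom (hu : ImplementsGrading 𝒜 u) :
    (hu.kleinInvHom ℬ).comp (hu.kleinHom ℬ) = AlgHom.id R (𝒜 ᵍ⊗[R] ℬ) := by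
  refine AlgHom.toLinearMap_injective <| GradedTensorProduct.hom_ext _ _ <|
    TensorProduct.ext' fun a b => ?_
  change hu.kleinInvHom ℬ (hu.kleinHom ℬ (a ᵍ⊗ₜ b)) = a ᵍ⊗ₜ b
  conv_rhs => rw [← decompose_zero_add_decompose_one ℬ b]
  rw [kleinHom_tmul, map_add, kleinInvHom_tmul_of_mem_zero ℬ hu a (SetLike.coe_mem _),
    kleinInvHom_tmul_of_mem_one ℬ hu _ (SetLike.coe_mem _), mul_assoc, hu.mul_self, mul_one,
    GradedTensorProduct.tmul_add]

noncomputable def kleinEquiv (hu : ImplementsGrading 𝒜 u) : 𝒜 ᵍ⊗[R] ℬ ≃ₐ[R] A ⊗[R] B :=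
  AlgEquiv.ofAlgHom (hu.kleinHom ℬ) (hu.kleinInvHom ℬ) (hu.kleinHom_comp_kleinInvHom ℬ)
    (hu.kleinInvHom_comp_kleinHom ℬ)

end ImplementsGrading

end ZModTwo

/-- **Klein transformation** (algebraic core, Proposition 3.1 / Theorem 3.2(a)).
If `u ∈ 𝒜 0` is an even square root of `1` implementing the grading of `A`, then the
graded (Fermi) tensor product `𝒜 ᵍ⊗[ℂ] ℬ` is isomorphic, as a `ℂ`-algebra, to the ordinary
tensor product `A ⊗[ℂ] B`, via `a ⊗' b ↦ a ⊗ b₀ + (a·u) ⊗ b₁`. -/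
theorem klein_transformation_exists
    {A B : Type*} [Ring A] [Ring B] [Algebra ℂ A] [Algebra ℂ B]
    (𝒜 : ZMod 2 → Submodule ℂ A) (ℬ : ZMod 2 → Submodule ℂ B)
    [GradedAlgebra 𝒜] [GradedAlgebra ℬ]
    (u : A) (hu0 : u ∈ 𝒜 0) (hu2 : u * u = 1)
    (hu : ∀ (i : ZMod 2) (a : A), a ∈ 𝒜 i → u * a = ((-1 : ℂ) ^ i.val) • (a * u)) :
    ∃ κ : (𝒜 ᵍ⊗[ℂ] ℬ) ≃ₐ[ℂ] (A ⊗[ℂ] B),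
      (∀ (a : A) (b : B),
        κ (a ᵍ⊗ₜ[ℂ] b) =
          a ⊗ₜ[ℂ] ((DirectSum.decompose ℬ b 0 : ℬ 0) : B)
            + (a * u) ⊗ₜ[ℂ] ((DirectSum.decompose ℬ b 1 : ℬ 1) : B)) ∧
      (∀ (a : A) (b : B),
        κ.symm (a ⊗ₜ[ℂ] b) =
          a ᵍ⊗ₜ[ℂ] ((DirectSum.decompose ℬ b 0 : ℬ 0) : B)
            + (a * u) ᵍ⊗ₜ[ℂ] ((DirectSum.decompose ℬ b 1 : ℬ 1) : B)) := by
  have hgr : ImplementsGrading 𝒜 u :=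
    { mem_zero := hu0
      mul_self := hu2
      mul_comm_of_mem_zero := fun a ha => by simpa using hu 0 a ha
      mul_anticomm_of_mem_one := fun a ha => by simpa [ZMod.val_one] using hu 1 a ha }
  exact ⟨hgr.kleinEquiv ℬ, hgr.kleinHom_tmul ℬ, hgr.kleinInvHom_tmul ℬ⟩
end

section
/- Let A and B be unital ℂ-algebras with ℤ₂-gradings 𝒜 and ℬ, let u ∈ A be homogeneous of degree 0 with u² = 1 implementing the grading of A, and let κ : A ⊗' B → A ⊗[ℂ] B be the Klein isomorphism determined by κ(a ⊗' b) = a ⊗ b₀ + (a·u) ⊗ b₁. Let J_A : A → A be the grading automorphism J_A(x) = x₀ − x₁ and J_B : B → B the grading automorphism J_B(y) = y₀ − y₁. Then κ intertwines the induced gradings: for all a ∈ A and b ∈ B, κ((J_A a) ⊗' (J_B b)) = (TensorProduct.map J_A J_B)(κ(a ⊗' b)). (Grading equivariance, Theorem 3.2(b).) -/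
open scoped TensorProduct
open DirectSum

private lemma decompose_zmod2_sum {M : Type*} [AddCommMonoid M] [Module ℂ M]
    (ℳ : ZMod 2 → Submodule ℂ M) [DirectSum.Decomposition ℳ] (x : M) :
    ((DirectSum.decompose ℳ x 0 : ℳ 0) : M) + ((DirectSum.decompose ℳ x 1 : ℳ 1) : M) = x := by
  classical
  conv_rhs => rw [← DirectSum.sum_support_decompose ℳ x]
  rw [Finset.sum_subset (Finset.subset_univ _) (by
    intro i _ hi
    simp only [DFinsupp.mem_support_iff, not_not] at hi
    rw [hi]; rfl)]
  rw [show (Finset.univ : Finset (ZMod 2)) = {0, 1} from rfl,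
    Finset.sum_pair (by decide : (0 : ZMod 2) ≠ 1)]
private lemma decompose_comp0 {M : Type*} [AddCommGroup M] [Module ℂ M]
    (ℳ : ZMod 2 → Submodule ℂ M) [DirectSum.Decomposition ℳ] (x y : M)
    (hx : x ∈ ℳ 0) (hy : y ∈ ℳ 1) :
    ((DirectSum.decompose ℳ (x - y) 0 : ℳ 0) : M) = x := by
  rw [DirectSum.decompose_sub, DirectSum.sub_apply, AddSubgroupClass.coe_sub,
    DirectSum.decompose_of_mem_same ℳ hx,
    DirectSum.decompose_of_mem_ne ℳ hy (by decide : (1 : ZMod 2) ≠ 0), sub_zero]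

private lemma decompose_comp1 {M : Type*} [AddCommGroup M] [Module ℂ M]
    (ℳ : ZMod 2 → Submodule ℂ M) [DirectSum.Decomposition ℳ] (x y : M)
    (hx : x ∈ ℳ 0) (hy : y ∈ ℳ 1) :
    ((DirectSum.decompose ℳ (x - y) 1 : ℳ 1) : M) = -y := by
  rw [DirectSum.decompose_sub, DirectSum.sub_apply, AddSubgroupClass.coe_sub,
    DirectSum.decompose_of_mem_same ℳ hy,
    DirectSum.decompose_of_mem_ne ℳ hx (by decide : (0 : ZMod 2) ≠ 1), zero_sub]

/-- **Grading equivariance of the Klein transformation** (Theorem 3.2(b)).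
The Klein isomorphism `κ` determined by `κ(a ⊗' b) = a ⊗ b₀ + (a·u) ⊗ b₁` intertwines the
grading automorphisms `J_A : x ↦ x₀ - x₁` and `J_B : y ↦ y₀ - y₁`. -/
theorem klein_transformation_grading_equivariant
    {A B : Type*} [Ring A] [Ring B] [Algebra ℂ A] [Algebra ℂ B]
    (𝒜 : ZMod 2 → Submodule ℂ A) (ℬ : ZMod 2 → Submodule ℂ B)
    [GradedAlgebra 𝒜] [GradedAlgebra ℬ]
    (u : A) (hu0 : u ∈ 𝒜 0) (hu2 : u * u = 1)
    (hu : ∀ (i : ZMod 2) (a : A), a ∈ 𝒜 i → u * a = ((-1 : ℂ) ^ i.val) • (a * u))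
    (κ : (𝒜 ᵍ⊗[ℂ] ℬ) ≃ₐ[ℂ] (A ⊗[ℂ] B))
    (hκ : ∀ (a : A) (b : B),
      κ (a ᵍ⊗ₜ[ℂ] b) =
        a ⊗ₜ[ℂ] ((DirectSum.decompose ℬ b 0 : ℬ 0) : B)
          + (a * u) ⊗ₜ[ℂ] ((DirectSum.decompose ℬ b 1 : ℬ 1) : B))
    (JA : A →ₗ[ℂ] A) (JB : B →ₗ[ℂ] B)
    (hJA : ∀ x : A, JA x =
      ((DirectSum.decompose 𝒜 x 0 : 𝒜 0) : A) - ((DirectSum.decompose 𝒜 x 1 : 𝒜 1) : A))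
    (hJB : ∀ y : B, JB y =
      ((DirectSum.decompose ℬ y 0 : ℬ 0) : B) - ((DirectSum.decompose ℬ y 1 : ℬ 1) : B)) :
    ∀ (a : A) (b : B),
      κ ((JA a) ᵍ⊗ₜ[ℂ] (JB b)) = TensorProduct.map JA JB (κ (a ᵍ⊗ₜ[ℂ] b)) := by
  intro a b
  have ha0m : ((DirectSum.decompose 𝒜 a 0 : 𝒜 0) : A) ∈ 𝒜 0 := SetLike.coe_mem _
  have ha1m : ((DirectSum.decompose 𝒜 a 1 : 𝒜 1) : A) ∈ 𝒜 1 := SetLike.coe_mem _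
  have hb0m : ((DirectSum.decompose ℬ b 0 : ℬ 0) : B) ∈ ℬ 0 := SetLike.coe_mem _
  have hb1m : ((DirectSum.decompose ℬ b 1 : ℬ 1) : B) ∈ ℬ 1 := SetLike.coe_mem _
  have hJBb0 : ((DirectSum.decompose ℬ (JB b) 0 : ℬ 0) : B)
      = ((DirectSum.decompose ℬ b 0 : ℬ 0) : B) := by
    rw [hJB b, decompose_comp0 ℬ _ _ hb0m hb1m]
  have hJBb1 : ((DirectSum.decompose ℬ (JB b) 1 : ℬ 1) : B)
      = -((DirectSum.decompose ℬ b 1 : ℬ 1) : B) := by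
    rw [hJB b, decompose_comp1 ℬ _ _ hb0m hb1m]
  have hau0 : ((DirectSum.decompose 𝒜 a 0 : 𝒜 0) : A) * u ∈ 𝒜 0 := by
    simpa using SetLike.mul_mem_graded ha0m hu0
  have hau1 : ((DirectSum.decompose 𝒜 a 1 : 𝒜 1) : A) * u ∈ 𝒜 1 := by
    simpa using SetLike.mul_mem_graded ha1m hu0
  have hau : a * u = ((DirectSum.decompose 𝒜 a 0 : 𝒜 0) : A) * u
      - (-(((DirectSum.decompose 𝒜 a 1 : 𝒜 1) : A) * u)) := by
    rw [sub_neg_eq_add, ← add_mul, decompose_zmod2_sum]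
  have hJAau : JA (a * u) = JA a * u := by
    rw [hJA (a * u), hJA a, hau,
      decompose_comp0 𝒜 _ _ hau0 (by simpa using neg_mem hau1),
      decompose_comp1 𝒜 _ _ hau0 (by simpa using neg_mem hau1), neg_neg, sub_mul]
  have hJBb0' : JB ((DirectSum.decompose ℬ b 0 : ℬ 0) : B)
      = ((DirectSum.decompose ℬ b 0 : ℬ 0) : B) := by
    rw [hJB, DirectSum.decompose_of_mem_same ℬ hb0m,
      DirectSum.decompose_of_mem_ne ℬ hb0m (by decide : (0 : ZMod 2) ≠ 1), sub_zero]
  have hJBb1' : JB ((DirectSum.decompose ℬ b 1 : ℬ 1) : B)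
      = -((DirectSum.decompose ℬ b 1 : ℬ 1) : B) := by
    rw [hJB, DirectSum.decompose_of_mem_same ℬ hb1m,
      DirectSum.decompose_of_mem_ne ℬ hb1m (by decide : (1 : ZMod 2) ≠ 0), zero_sub]
  rw [hκ, hκ, hJBb0, hJBb1, map_add, TensorProduct.map_tmul, TensorProduct.map_tmul,
    hJAau, hJBb0', hJBb1']
end

section
/- Let A and B be unital ℂ-algebras with ℤ₂-gradings 𝒜 and ℬ, let u ∈ A be homogeneous of degree 0 with u² = 1 implementing the grading of A, and let κ : A ⊗' B → A ⊗[ℂ] B be the Klein isomorphism determined by κ(a ⊗' b) = a ⊗ b₀ + (a·u) ⊗ b₁. Let ω : A → ℂ be any ℂ-linear functional and let φ : B → ℂ be an even ℂ-linear functional, i.e. φ vanishes on all odd elements (φ(b₁) = 0 for every b ∈ B). Then the pullback under κ of the product functional ω ⊗ φ on A ⊗[ℂ] B (the linear functional induced by a ⊗ b ↦ ω(a)·φ(b)) is the product functional on A ⊗' B: for all a ∈ A, b ∈ B, (ω ⊗ φ)(κ(a ⊗' b)) = ω(a)·φ(b). (Transpose of the Klein transformation maps even product states to product states, Theorem 3.2.)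 -/
open scoped TensorProduct
open DirectSum

lemma decompose_zmod2_add {B : Type*} [Ring B] [Algebra ℂ B] (ℬ : ZMod 2 → Submodule ℂ B)
    [GradedAlgebra ℬ] (b : B) :
    ((decompose ℬ b 0 : ℬ 0) : B) + ((decompose ℬ b 1 : ℬ 1) : B) = b := by
  classical
  conv_rhs => rw [← DirectSum.sum_support_decompose ℬ b]
  rw [Finset.sum_subset (Finset.subset_univ _) (fun x _ hx => by
    simpa using (DFinsupp.notMem_support_iff.mp hx))]
  rw [show (Finset.univ : Finset (ZMod 2)) = {0, 1} from rfl]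
  simp

/-- **The transpose of the Klein transformation maps even product functionals to product
functionals** (Theorem 3.2). If `φ` is even (vanishes on odd components), then pulling back
the product functional `ω ⊗ φ` on `A ⊗[ℂ] B` along the Klein isomorphism `κ` gives the
product functional on the graded tensor product: `(ω ⊗ φ)(κ(a ⊗' b)) = ω(a)·φ(b)`. -/
theorem klein_transformation_product_state
    {A B : Type*} [Ring A] [Ring B] [Algebra ℂ A] [Algebra ℂ B]
    (𝒜 : ZMod 2 → Submodule ℂ A) (ℬ : ZMod 2 → Submodule ℂ B)
    [GradedAlgebra 𝒜] [GradedAlgebra ℬ]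
    (u : A) (hu0 : u ∈ 𝒜 0) (hu2 : u * u = 1)
    (hu : ∀ (i : ZMod 2) (a : A), a ∈ 𝒜 i → u * a = ((-1 : ℂ) ^ i.val) • (a * u))
    (κ : (𝒜 ᵍ⊗[ℂ] ℬ) ≃ₐ[ℂ] (A ⊗[ℂ] B))
    (hκ : ∀ (a : A) (b : B),
      κ (a ᵍ⊗ₜ[ℂ] b) =
        a ⊗ₜ[ℂ] ((DirectSum.decompose ℬ b 0 : ℬ 0) : B)
          + (a * u) ⊗ₜ[ℂ] ((DirectSum.decompose ℬ b 1 : ℬ 1) : B))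
    (ω : A →ₗ[ℂ] ℂ) (φ : B →ₗ[ℂ] ℂ)
    (hφ : ∀ b : B, φ ((DirectSum.decompose ℬ b 1 : ℬ 1) : B) = 0) :
    ∀ (a : A) (b : B),
      TensorProduct.lift (((LinearMap.mul ℂ ℂ).comp ω).compl₂ φ) (κ (a ᵍ⊗ₜ[ℂ] b))
        = ω a * φ b := by
  intro a b
  have hb : φ ((decompose ℬ b 0 : ℬ 0) : B) = φ b := by
    conv_rhs => rw [← decompose_zmod2_add ℬ b]
    rw [map_add, hφ, add_zero]
  rw [hκ]
  simp [hφ, hb]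
end

section
/- Let A and B be unital ℂ-algebras with ℤ₂-gradings 𝒜 and ℬ, and let u ∈ A be homogeneous of degree 0 with u² = 1 implementing the grading of A (u·a = (−1)^i·a·u for every i : ZMod 2 and every a ∈ 𝒜 i). Then in the graded tensor product A ⊗' B, for every a ∈ A and every b ∈ B the elements a ⊗' 1 and 1 ⊗' b₀ + u ⊗' b₁ commute: (a ⊗' 1)·(1 ⊗' b₀ + u ⊗' b₁) = (1 ⊗' b₀ + u ⊗' b₁)·(a ⊗' 1). (Commutation of the Klein generators, key step in the proof of Proposition 3.1.) -/
/-!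
Both sides are additive in `a`, so we may take `a ∈ 𝒜 i`. The even part `1 ⊗ b₀` commutes with
`a ⊗ 1` without a sign. Moving `a` past the odd `b₁` costs `(-1)^i`, and moving it past `u` costs
the same sign by the hypothesis on `u`, so the two cancel:
`(u ⊗ b₁)(a ⊗ 1) = (-1)^i (u a) ⊗ b₁ = (a u) ⊗ b₁ = (a ⊗ 1)(u ⊗ b₁)`.
-/

open scoped TensorProduct
open DirectSum

theorem units_neg_one_pow_smul_neg_one_pow_val_smul {R M : Type*} [CommRing R] [AddCommGroup M]
    [Module R M] (i : ZMod 2) (x : M) :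
    (-1 : ℤˣ) ^ i • (-1 : R) ^ i.val • x = x := by
  obtain rfl | rfl : i = 0 ∨ i = 1 := by revert i; decide
  · simp
  · simp [ZMod.val_one, Units.smul_def]

namespace GradedTensorProduct

section

variable {ι R A B : Type*} [CommSemiring ι] [DecidableEq ι] [CommRing R] [Ring A] [Ring B]
  [Algebra R A] [Algebra R B] (𝒜 : ι → Submodule R A) (ℬ : ι → Submodule R B)
  [GradedAlgebra 𝒜] [GradedAlgebra ℬ] [Module ι (Additive ℤˣ)]

theorem smul_tmul' (r : R) (a : A) (b : B) :
    r • (a ᵍ⊗ₜ[R] b : 𝒜 ᵍ⊗[R] ℬ) = (r • a) ᵍ⊗ₜ b := by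
  rw [← map_smul, TensorProduct.smul_tmul']

theorem tmul_one_mul_tmul (a₁ a₂ : A) (b : B) :
    (a₁ ᵍ⊗ₜ[R] (1 : B) * a₂ ᵍ⊗ₜ[R] b : 𝒜 ᵍ⊗[R] ℬ) = (a₁ * a₂) ᵍ⊗ₜ b := by
  rw [← tmul_one_mul_one_tmul 𝒜 ℬ a₂, ← mul_assoc, ← includeLeft_apply, ← includeLeft_apply,
    ← map_mul, includeLeft_apply, tmul_one_mul_one_tmul]

theorem commute_tmul_one_of_forall_mem {z : 𝒜 ᵍ⊗[R] ℬ}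
    (h : ∀ i, ∀ a ∈ 𝒜 i, Commute (a ᵍ⊗ₜ[R] (1 : B)) z) (a : A) :
    Commute (a ᵍ⊗ₜ[R] (1 : B)) z := by
  induction a using DirectSum.Decomposition.inductionOn 𝒜 with
  | zero => simpa only [← includeLeft_apply, map_zero] using Commute.zero_left z
  | homogeneous a => exact h _ a a.2
  | add x y hx hy => simpa only [← includeLeft_apply, map_add] using hx.add_left hy

theorem commute_tmul_one_one_tmul_of_mem_zero {i : ι} {a : A} {b : B} (ha : a ∈ 𝒜 i)
    (hb : b ∈ ℬ 0) :
    Commute (a ᵍ⊗ₜ[R] (1 : B) : 𝒜 ᵍ⊗[R] ℬ) ((1 : A) ᵍ⊗ₜ[R] b) := by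
  change _ = _
  rw [tmul_one_mul_one_tmul, tmul_zero_coe_mul_coe_tmul 𝒜 ℬ 1 ⟨b, hb⟩ ⟨a, ha⟩, one_mul, mul_one]

end

theorem commute_tmul_one_tmul_of_mem_one {R A B : Type*} [CommRing R] [Ring A] [Ring B]
    [Algebra R A] [Algebra R B] (𝒜 : ZMod 2 → Submodule R A) (ℬ : ZMod 2 → Submodule R B)
    [GradedAlgebra 𝒜] [GradedAlgebra ℬ] {i : ZMod 2} {a u : A} {b : B} (ha : a ∈ 𝒜 i)
    (hu : u * a = (-1 : R) ^ i.val • (a * u)) (hb : b ∈ ℬ 1) :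
    Commute (a ᵍ⊗ₜ[R] (1 : B) : 𝒜 ᵍ⊗[R] ℬ) (u ᵍ⊗ₜ[R] b) := by
  change _ = _
  rw [tmul_one_mul_tmul, tmul_coe_mul_coe_tmul 𝒜 ℬ u ⟨b, hb⟩ ⟨a, ha⟩, one_mul, hu, mul_one,
    ← smul_tmul', units_neg_one_pow_smul_neg_one_pow_val_smul]

end GradedTensorProduct

theorem klein_generators_commute_general
    {A B : Type*} [Ring A] [Ring B] [Algebra ℂ A] [Algebra ℂ B]
    (𝒜 : ZMod 2 → Submodule ℂ A) (ℬ : ZMod 2 → Submodule ℂ B)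
    [GradedAlgebra 𝒜] [GradedAlgebra ℬ]
    (u : A)
    (hu : ∀ (i : ZMod 2) (a : A), a ∈ 𝒜 i → u * a = ((-1 : ℂ) ^ i.val) • (a * u)) :
    ∀ (a : A) (b : B),
      ((a ᵍ⊗ₜ[ℂ] (1 : B) : 𝒜 ᵍ⊗[ℂ] ℬ))
          * ((1 : A) ᵍ⊗ₜ[ℂ] ((DirectSum.decompose ℬ b 0 : ℬ 0) : B)
              + u ᵍ⊗ₜ[ℂ] ((DirectSum.decompose ℬ b 1 : ℬ 1) : B))
        = ((1 : A) ᵍ⊗ₜ[ℂ] ((DirectSum.decompose ℬ b 0 : ℬ 0) : B)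
              + u ᵍ⊗ₜ[ℂ] ((DirectSum.decompose ℬ b 1 : ℬ 1) : B))
            * (a ᵍ⊗ₜ[ℂ] (1 : B)) := by
  intro a b
  refine (GradedTensorProduct.commute_tmul_one_of_forall_mem 𝒜 ℬ (fun i a ha => ?_) a).eq
  exact (GradedTensorProduct.commute_tmul_one_one_tmul_of_mem_zero 𝒜 ℬ ha
    (decompose ℬ b 0).2).add_right
    (GradedTensorProduct.commute_tmul_one_tmul_of_mem_one 𝒜 ℬ ha (hu i a ha) (decompose ℬ b 1).2)

/-- **Commutation of the Klein generators** (key step in the proof of Proposition 3.1).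
In the graded tensor product `𝒜 ᵍ⊗[ℂ] ℬ`, the elements `a ⊗' 1` and
`1 ⊗' b₀ + u ⊗' b₁` commute, when `u ∈ 𝒜 0`, `u² = 1` implements the grading of `A`. -/
theorem klein_generators_commute
    {A B : Type*} [Ring A] [Ring B] [Algebra ℂ A] [Algebra ℂ B]
    (𝒜 : ZMod 2 → Submodule ℂ A) (ℬ : ZMod 2 → Submodule ℂ B)
    [GradedAlgebra 𝒜] [GradedAlgebra ℬ]
    (u : A) (hu0 : u ∈ 𝒜 0) (hu2 : u * u = 1)
    (hu : ∀ (i : ZMod 2) (a : A), a ∈ 𝒜 i → u * a = ((-1 : ℂ) ^ i.val) • (a * u)) :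
    ∀ (a : A) (b : B),
      ((a ᵍ⊗ₜ[ℂ] (1 : B) : 𝒜 ᵍ⊗[ℂ] ℬ))
          * ((1 : A) ᵍ⊗ₜ[ℂ] ((DirectSum.decompose ℬ b 0 : ℬ 0) : B)
              + u ᵍ⊗ₜ[ℂ] ((DirectSum.decompose ℬ b 1 : ℬ 1) : B))
        = ((1 : A) ᵍ⊗ₜ[ℂ] ((DirectSum.decompose ℬ b 0 : ℬ 0) : B)
              + u ᵍ⊗ₜ[ℂ] ((DirectSum.decompose ℬ b 1 : ℬ 1) : B))
            * (a ᵍ⊗ₜ[ℂ] (1 : B)) :=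
  klein_generators_commute_general 𝒜 ℬ u hu
end

section
/- Let A and B be unital ℂ-algebras with ℤ₂-gradings 𝒜 and ℬ, and let u ∈ A be homogeneous of degree 0 with u² = 1. Then the map ψ : B → A ⊗' B defined by ψ(b) = 1 ⊗' b₀ + u ⊗' b₁ is a unital ℂ-algebra homomorphism: ψ is ℂ-linear, ψ(1) = 1, and ψ(b·d) = ψ(b)·ψ(d) for all b, d ∈ B. (The twisted copy of B inside the Fermi tensor product, step in the proof of Proposition 3.1.) -/
open scoped TensorProduct
open DirectSum

set_option maxHeartbeats 1000000 in
set_option synthInstance.maxHeartbeats 200000 in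
/-- **The twisted copy of `B` inside the Fermi tensor product** (step in the proof of
Proposition 3.1). If `u ∈ 𝒜 0` with `u² = 1`, then `b ↦ 1 ⊗' b₀ + u ⊗' b₁` is a unital
`ℂ`-algebra homomorphism from `B` to the graded tensor product `𝒜 ᵍ⊗[ℂ] ℬ`. -/
theorem klein_twisted_embedding_isAlgHom
    {A B : Type*} [Ring A] [Ring B] [Algebra ℂ A] [Algebra ℂ B]
    (𝒜 : ZMod 2 → Submodule ℂ A) (ℬ : ZMod 2 → Submodule ℂ B)
    [GradedAlgebra 𝒜] [GradedAlgebra ℬ]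
    (u : A) (hu0 : u ∈ 𝒜 0) (hu2 : u * u = 1) :
    ∃ ψ : B →ₐ[ℂ] (𝒜 ᵍ⊗[ℂ] ℬ),
      ∀ b : B, ψ b =
        (1 : A) ᵍ⊗ₜ[ℂ] ((DirectSum.decompose ℬ b 0 : ℬ 0) : B)
          + u ᵍ⊗ₜ[ℂ] ((DirectSum.decompose ℬ b 1 : ℬ 1) : B) := by
  classical
  -- componentwise linearity of the decomposition
  have dadd : ∀ (i : ZMod 2) (x y : B),
      ((decompose ℬ (x + y) i : ℬ i) : B)
        = ((decompose ℬ x i : ℬ i) : B) + ((decompose ℬ y i : ℬ i) : B) := by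
    intro i x y
    rw [DirectSum.decompose_add]
    rfl
  have dsmul : ∀ (i : ZMod 2) (c : ℂ) (x : B),
      ((decompose ℬ (c • x) i : ℬ i) : B) = c • ((decompose ℬ x i : ℬ i) : B) := by
    intro i c x
    rw [DirectSum.decompose_smul]
    rfl
  -- linearity of graded tmul in the right factor
  have tadd : ∀ (a : A) (p q : B),
      (a ᵍ⊗ₜ[ℂ] (p + q) : 𝒜 ᵍ⊗[ℂ] ℬ) = a ᵍ⊗ₜ[ℂ] p + a ᵍ⊗ₜ[ℂ] q := by
    intro a p q
    show GradedTensorProduct.of ℂ 𝒜 ℬ (a ⊗ₜ (p + q)) = _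
    rw [TensorProduct.tmul_add, map_add]
  have tsmul : ∀ (a : A) (c : ℂ) (p : B),
      (a ᵍ⊗ₜ[ℂ] (c • p) : 𝒜 ᵍ⊗[ℂ] ℬ) = c • (a ᵍ⊗ₜ[ℂ] p) := by
    intro a c p
    show GradedTensorProduct.of ℂ 𝒜 ℬ (a ⊗ₜ (c • p)) = _
    rw [TensorProduct.tmul_smul, map_smul]
  have tzero : ∀ a : A, (a ᵍ⊗ₜ[ℂ] (0 : B) : 𝒜 ᵍ⊗[ℂ] ℬ) = 0 := by
    intro a
    show GradedTensorProduct.of ℂ 𝒜 ℬ (a ⊗ₜ (0 : B)) = 0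
    rw [TensorProduct.tmul_zero, map_zero]
  -- every element is the sum of its even and odd parts
  have hdec : ∀ x : B,
      x = ((decompose ℬ x 0 : ℬ 0) : B) + ((decompose ℬ x 1 : ℬ 1) : B) := by
    intro x
    have huniv : (Finset.univ : Finset (ZMod 2)) = {0, 1} := by decide
    conv_lhs => rw [← DirectSum.sum_support_decompose ℬ x]
    rw [Finset.sum_subset (Finset.subset_univ _)
      (fun i _ hi => by rw [DFinsupp.notMem_support_iff.mp hi]; rfl)]
    rw [huniv, Finset.sum_insert (by decide), Finset.sum_singleton]
  -- the components of a product
  have hcomp : ∀ b d : B,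
      ((decompose ℬ (b * d) 0 : ℬ 0) : B) =
        ((decompose ℬ b 0 : ℬ 0) : B) * ((decompose ℬ d 0 : ℬ 0) : B)
          + ((decompose ℬ b 1 : ℬ 1) : B) * ((decompose ℬ d 1 : ℬ 1) : B)
      ∧ ((decompose ℬ (b * d) 1 : ℬ 1) : B) =
        ((decompose ℬ b 0 : ℬ 0) : B) * ((decompose ℬ d 1 : ℬ 1) : B)
          + ((decompose ℬ b 1 : ℬ 1) : B) * ((decompose ℬ d 0 : ℬ 0) : B) := by
    intro b d
    set b0 : B := ((decompose ℬ b 0 : ℬ 0) : B) with hb0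
    set b1 : B := ((decompose ℬ b 1 : ℬ 1) : B) with hb1
    set d0 : B := ((decompose ℬ d 0 : ℬ 0) : B) with hd0
    set d1 : B := ((decompose ℬ d 1 : ℬ 1) : B) with hd1
    have mb0 : b0 ∈ ℬ 0 := (decompose ℬ b 0).2
    have mb1 : b1 ∈ ℬ 1 := (decompose ℬ b 1).2
    have md0 : d0 ∈ ℬ 0 := (decompose ℬ d 0).2
    have md1 : d1 ∈ ℬ 1 := (decompose ℬ d 1).2
    have hX : b0 * d0 + b1 * d1 ∈ ℬ 0 := by
      refine add_mem ?_ ?_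
      · simpa using SetLike.mul_mem_graded mb0 md0
      · have := SetLike.mul_mem_graded mb1 md1
        simpa [show ((1 : ZMod 2) + 1) = 0 by decide] using this
    have hY : b0 * d1 + b1 * d0 ∈ ℬ 1 := by
      refine add_mem ?_ ?_
      · simpa using SetLike.mul_mem_graded mb0 md1
      · simpa using SetLike.mul_mem_graded mb1 md0
    have expand : b * d = (b0 * d0 + b1 * d1) + (b0 * d1 + b1 * d0) := by
      conv_lhs => rw [hdec b, hdec d]
      rw [← hb0, ← hb1, ← hd0, ← hd1]
      rw [add_mul, mul_add, mul_add]
      abel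
    constructor
    · rw [expand, dadd]
      rw [DirectSum.decompose_of_mem_same ℬ hX,
        DirectSum.decompose_of_mem_ne ℬ hY (by decide : (1 : ZMod 2) ≠ 0), add_zero]
    · rw [expand, dadd]
      rw [DirectSum.decompose_of_mem_same ℬ hY,
        DirectSum.decompose_of_mem_ne ℬ hX (by decide : (0 : ZMod 2) ≠ 1), zero_add]
  -- the underlying linear map
  let f : B →ₗ[ℂ] 𝒜 ᵍ⊗[ℂ] ℬ :=
    { toFun := fun b =>
        (1 : A) ᵍ⊗ₜ[ℂ] ((decompose ℬ b 0 : ℬ 0) : B)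
          + u ᵍ⊗ₜ[ℂ] ((decompose ℬ b 1 : ℬ 1) : B)
      map_add' := fun x y => by
        dsimp only
        rw [dadd, dadd, tadd, tadd]
        abel
      map_smul' := fun c x => by
        dsimp only
        rw [dsmul, dsmul, tsmul, tsmul, RingHom.id_apply, smul_add] }
  have hf : ∀ b : B, f b =
      (1 : A) ᵍ⊗ₜ[ℂ] ((decompose ℬ b 0 : ℬ 0) : B)
        + u ᵍ⊗ₜ[ℂ] ((decompose ℬ b 1 : ℬ 1) : B) := fun _ => rfl
  have hmul_u : ∀ (j : ZMod 2) (a₁ : A) (b₁ : ℬ j) (b₂ : B),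
      (a₁ ᵍ⊗ₜ[ℂ] (b₁ : B) * u ᵍ⊗ₜ[ℂ] b₂ : 𝒜 ᵍ⊗[ℂ] ℬ) = (a₁ * u) ᵍ⊗ₜ[ℂ] ((b₁ : B) * b₂) :=
    fun j a₁ b₁ b₂ =>
      GradedTensorProduct.tmul_coe_mul_zero_coe_tmul 𝒜 ℬ a₁ b₁ (⟨u, hu0⟩ : 𝒜 0) b₂
  refine ⟨AlgHom.ofLinearMap f ?_ ?_, fun b => hf b⟩
  · -- f 1 = 1
    have h10 : ((decompose ℬ (1 : B) 0 : ℬ 0) : B) = 1 :=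
      DirectSum.decompose_of_mem_same ℬ (SetLike.one_mem_graded ℬ)
    have h11 : ((decompose ℬ (1 : B) 1 : ℬ 1) : B) = 0 :=
      DirectSum.decompose_of_mem_ne ℬ (SetLike.one_mem_graded ℬ)
        (by decide : (0 : ZMod 2) ≠ 1)
    rw [hf, h10, h11, tzero, add_zero]
    rfl
  · -- multiplicativity
    intro b d
    obtain ⟨h0, h1⟩ := hcomp b d
    rw [hf, hf, hf, h0, h1]
    set b0 : B := ((decompose ℬ b 0 : ℬ 0) : B)
    set b1 : B := ((decompose ℬ b 1 : ℬ 1) : B)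
    set d0 : B := ((decompose ℬ d 0 : ℬ 0) : B)
    set d1 : B := ((decompose ℬ d 1 : ℬ 1) : B)
    rw [add_mul, mul_add, mul_add]
    rw [GradedTensorProduct.tmul_coe_mul_one_tmul 𝒜 ℬ (1 : A) (decompose ℬ b 0) d0,
      hmul_u 0 (1 : A) (decompose ℬ b 0) d1,
      GradedTensorProduct.tmul_coe_mul_one_tmul 𝒜 ℬ u (decompose ℬ b 1) d0,
      hmul_u 1 u (decompose ℬ b 1) d1, one_mul, hu2]
    rw [tadd, tadd]
    abel
end

section
/- Let A and B be unital ℂ-algebras with ℤ₂-gradings 𝒜 and ℬ, and let u ∈ A be homogeneous of degree 0 with u² = 1. Then the graded tensor product A ⊗' B is generated as a ℂ-algebra by the set {a ⊗' 1 : a ∈ A} together with the set {1 ⊗' b₀ + u ⊗' b₁ : b ∈ B}; that is, Algebra.adjoin ℂ ({a ⊗' 1 : a ∈ A} ∪ {1 ⊗' b₀ + u ⊗' b₁ : b ∈ B}) = ⊤. (Generation step in the proof of Proposition 3.1.) -/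
open scoped TensorProduct
open DirectSum

/-- **Generation step in the proof of Proposition 3.1.** The graded tensor product
`𝒜 ᵍ⊗[ℂ] ℬ` is generated, as a `ℂ`-algebra, by the copy `{a ⊗' 1}` of `A` together with
the twisted copy `{1 ⊗' b₀ + u ⊗' b₁}` of `B`. -/
theorem klein_generators_adjoin_top
    {A B : Type*} [Ring A] [Ring B] [Algebra ℂ A] [Algebra ℂ B]
    (𝒜 : ZMod 2 → Submodule ℂ A) (ℬ : ZMod 2 → Submodule ℂ B)
    [GradedAlgebra 𝒜] [GradedAlgebra ℬ]
    (u : A) (hu0 : u ∈ 𝒜 0) (hu2 : u * u = 1) :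
    Algebra.adjoin ℂ
      ({x : 𝒜 ᵍ⊗[ℂ] ℬ | ∃ a : A, x = a ᵍ⊗ₜ[ℂ] (1 : B)} ∪
        {x : 𝒜 ᵍ⊗[ℂ] ℬ | ∃ b : B,
          x = (1 : A) ᵍ⊗ₜ[ℂ] ((DirectSum.decompose ℬ b 0 : ℬ 0) : B)
                + u ᵍ⊗ₜ[ℂ] ((DirectSum.decompose ℬ b 1 : ℬ 1) : B)}) = ⊤ := by
  classical
  have tz : ∀ a : A, (a ᵍ⊗ₜ[ℂ] (0 : B) : 𝒜 ᵍ⊗[ℂ] ℬ) = 0 := fun a => by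
    show GradedTensorProduct.of ℂ 𝒜 ℬ (a ⊗ₜ[ℂ] (0 : B)) = 0
    rw [TensorProduct.tmul_zero, map_zero]
  have ta : ∀ (a : A) (b c : B),
      (a ᵍ⊗ₜ[ℂ] (b + c) : 𝒜 ᵍ⊗[ℂ] ℬ) = a ᵍ⊗ₜ[ℂ] b + a ᵍ⊗ₜ[ℂ] c := fun a b c => by
    show GradedTensorProduct.of ℂ 𝒜 ℬ (a ⊗ₜ[ℂ] (b + c)) = _
    rw [TensorProduct.tmul_add, map_add]
  set S := Algebra.adjoin ℂ
      ({x : 𝒜 ᵍ⊗[ℂ] ℬ | ∃ a : A, x = a ᵍ⊗ₜ[ℂ] (1 : B)} ∪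
        {x : 𝒜 ᵍ⊗[ℂ] ℬ | ∃ b : B,
          x = (1 : A) ᵍ⊗ₜ[ℂ] ((DirectSum.decompose ℬ b 0 : ℬ 0) : B)
                + u ᵍ⊗ₜ[ℂ] ((DirectSum.decompose ℬ b 1 : ℬ 1) : B)}) with hS
  -- left copies
  have hleft : ∀ a : A, (a ᵍ⊗ₜ[ℂ] (1 : B) : 𝒜 ᵍ⊗[ℂ] ℬ) ∈ S := fun a =>
    Algebra.subset_adjoin (Or.inl ⟨a, rfl⟩)
  have hgen : ∀ b : B,
      ((1 : A) ᵍ⊗ₜ[ℂ] ((DirectSum.decompose ℬ b 0 : ℬ 0) : B)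
        + u ᵍ⊗ₜ[ℂ] ((DirectSum.decompose ℬ b 1 : ℬ 1) : B) : 𝒜 ᵍ⊗[ℂ] ℬ) ∈ S := fun b =>
    Algebra.subset_adjoin (Or.inr ⟨b, rfl⟩)
  -- the even part alone
  have h0 : ∀ b : B, ((1 : A) ᵍ⊗ₜ[ℂ] ((DirectSum.decompose ℬ b 0 : ℬ 0) : B) : 𝒜 ᵍ⊗[ℂ] ℬ) ∈ S := by
    intro b
    have := hgen ((DirectSum.decompose ℬ b 0 : ℬ 0) : B)
    rwa [DirectSum.decompose_coe, DirectSum.of_eq_same, DirectSum.of_eq_of_ne _ _ _ (by decide),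
      ZeroMemClass.coe_zero, tz, add_zero] at this
  -- the odd part with u
  have h1u : ∀ b : B, (u ᵍ⊗ₜ[ℂ] ((DirectSum.decompose ℬ b 1 : ℬ 1) : B) : 𝒜 ᵍ⊗[ℂ] ℬ) ∈ S := by
    intro b
    have := hgen ((DirectSum.decompose ℬ b 1 : ℬ 1) : B)
    rwa [DirectSum.decompose_coe, DirectSum.of_eq_same, DirectSum.of_eq_of_ne _ _ _ (by decide),
      ZeroMemClass.coe_zero, tz, zero_add] at this
  -- the odd part alone
  have h1 : ∀ b : B, ((1 : A) ᵍ⊗ₜ[ℂ] ((DirectSum.decompose ℬ b 1 : ℬ 1) : B) : 𝒜 ᵍ⊗[ℂ] ℬ) ∈ S := by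
    intro b
    have key : (u ᵍ⊗ₜ[ℂ] (1 : B) : 𝒜 ᵍ⊗[ℂ] ℬ) *
        (u ᵍ⊗ₜ[ℂ] ((DirectSum.decompose ℬ b 1 : ℬ 1) : B)) =
        (1 : A) ᵍ⊗ₜ[ℂ] ((DirectSum.decompose ℬ b 1 : ℬ 1) : B) := by
      have := GradedTensorProduct.tmul_one_mul_coe_tmul 𝒜 ℬ u (⟨u, hu0⟩ : 𝒜 0)
        ((DirectSum.decompose ℬ b 1 : ℬ 1) : B)
      rw [this, hu2]
    exact key ▸ mul_mem (hleft u) (h1u b)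
  -- right copies
  have hright : ∀ b : B, ((1 : A) ᵍ⊗ₜ[ℂ] b : 𝒜 ᵍ⊗[ℂ] ℬ) ∈ S := by
    intro b
    have hb : b = ((DirectSum.decompose ℬ b 0 : ℬ 0) : B)
        + ((DirectSum.decompose ℬ b 1 : ℬ 1) : B) := by
      conv_lhs => rw [← DirectSum.sum_support_decompose ℬ b]
      rw [Finset.sum_subset (Finset.subset_univ ((DirectSum.decompose ℬ b).support))
        (fun i _ hi => by simp [DFinsupp.notMem_support_iff.mp hi]),
        show (Finset.univ : Finset (ZMod 2)) = {0, 1} from by decide,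
        Finset.sum_insert (by decide), Finset.sum_singleton]
    have : ((1 : A) ᵍ⊗ₜ[ℂ] b : 𝒜 ᵍ⊗[ℂ] ℬ)
        = (1 : A) ᵍ⊗ₜ[ℂ] ((DirectSum.decompose ℬ b 0 : ℬ 0) : B)
          + (1 : A) ᵍ⊗ₜ[ℂ] ((DirectSum.decompose ℬ b 1 : ℬ 1) : B) := by
      rw [← ta, ← hb]
    rw [this]
    exact add_mem (h0 b) (h1 b)
  -- all pure tensors
  have htmul : ∀ (a : A) (b : B), (a ᵍ⊗ₜ[ℂ] b : 𝒜 ᵍ⊗[ℂ] ℬ) ∈ S := by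
    intro a b
    have := GradedTensorProduct.tmul_one_mul_one_tmul 𝒜 ℬ a b
    exact this ▸ mul_mem (hleft a) (hright b)
  rw [eq_top_iff]
  rintro x -
  have hx : x = GradedTensorProduct.of ℂ 𝒜 ℬ ((GradedTensorProduct.of ℂ 𝒜 ℬ).symm x) :=
    (GradedTensorProduct.symm_of_of 𝒜 ℬ x).symm
  rw [hx]
  induction (GradedTensorProduct.of ℂ 𝒜 ℬ).symm x using TensorProduct.induction_on with
  | zero => simpa using zero_mem S
  | tmul a b => exact htmul a b
  | add p q hp hq =>
      rw [map_add]
      exact add_mem hp hq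
end
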